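/- arXiv:2302.12350 — 2 statements merged into one kernel-verified Lean document; each statement's English description precedes it below -/
import Mathlib

section
/- Let m, n ∈ L¹(a,b) with m, n ≥ 0 and m + n ≢ 0, let f, g : [0,∞) → [0,∞) be continuous and assume (G1). Then for every μ > 0 there exists λ₀(μ) > 0 such that for each λ ∈ (0, λ₀(μ)) there exists w_λ ∈ P° which is a supersolution of problem (P): there exists 0 ≤ k_λ ∈ L¹(a,b) with k_λ(x) ≥ λ m(x) f(w_λ(x)) + μ n(x) g(w_λ(x)) for a.e. x ∈ (a,b) and φ(w_λ'(x)) = φ(w_λ'(a)) − ∫_a^x k_λ(s) ds for all x ∈ [a,b]. Moreover, the w_λ can be chosen so that sup_{[a,b]} |w_λ| → 0 as λ → 0⁺. -/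
open MeasureTheory Set Filter

/-- `φ` is an odd increasing homeomorphism of `ℝ`. -/
def OddIncHomeo (φ : ℝ → ℝ) : Prop :=
  StrictMono φ ∧ Continuous φ ∧ Function.Surjective φ ∧ ∀ x, φ (-x) = -φ x

/-- `u` is `C¹` on `[a,b]` with derivative `u'`. -/
def C1On (u u' : ℝ → ℝ) (a b : ℝ) : Prop :=
  ContinuousOn u (Icc a b) ∧ ContinuousOn u' (Icc a b) ∧
  ∀ x ∈ Icc a b, HasDerivWithinAt u (u' x) (Icc a b) x

/-- `u` (with derivative `u'`) is a solution of problem (P):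
`-(φ(u'))' = λ m f(u) + μ n g(u)` in `(a,b)`, `u(a) = u(b) = 0`. -/
def IsSolutionP (φ m n f g : ℝ → ℝ) (lam mu a b : ℝ) (u u' : ℝ → ℝ) : Prop :=
  C1On u u' a b ∧ u a = 0 ∧ u b = 0 ∧
  ∀ x ∈ Icc a b,
    φ (u' x) = φ (u' a) - ∫ s in a..x, (lam * m s * f (u s) + mu * n s * g (u s))

/-- Membership in the cone `P°`. -/
def InPint (u u' : ℝ → ℝ) (a b : ℝ) : Prop :=
  (∀ x ∈ Ioo a b, 0 < u x) ∧ u' b < 0 ∧ 0 < u' a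

/-- Condition (F). -/
def CondF (φ f : ℝ → ℝ) : Prop :=
  ∃ c₀ t₀ q : ℝ, 0 < c₀ ∧ 0 < t₀ ∧ 0 < q ∧
    (∀ t ∈ Icc (0:ℝ) t₀, c₀ * t ^ q ≤ f t) ∧
    Tendsto (fun t : ℝ => t ^ q / φ t) (nhdsWithin 0 (Ioi 0)) atTop

/-- Condition (G1). -/
def CondG1 (φ g : ℝ → ℝ) : Prop :=
  ∃ c₁ t₁ r₁ : ℝ, 0 < c₁ ∧ 0 < t₁ ∧ 0 < r₁ ∧
    (∀ t ∈ Icc (0:ℝ) t₁, g t ≤ c₁ * t ^ r₁) ∧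
    Tendsto (fun t : ℝ => t ^ r₁ / φ t) (nhdsWithin 0 (Ioi 0)) (nhds 0)

/-- Condition (G2). -/
def CondG2 (φ g : ℝ → ℝ) : Prop :=
  ∃ c₂ t₂ r₂ : ℝ, 0 < c₂ ∧ 0 < t₂ ∧ 0 < r₂ ∧
    (∀ t : ℝ, t₂ ≤ t → c₂ * t ^ r₂ ≤ g t) ∧
    Tendsto (fun t : ℝ => t ^ r₂ / φ t) atTop atTop

set_option maxHeartbeats 2000000 in
theorem exists_supersolution_aux
    (a b : ℝ) (hab : a < b) (φ m n f g : ℝ → ℝ)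
    (hφ : OddIncHomeo φ)
    (hm : IntegrableOn m (Icc a b)) (hn : IntegrableOn n (Icc a b))
    (hm0 : ∀ᵐ x ∂(volume : Measure ℝ), x ∈ Ioo a b → 0 ≤ m x)
    (hn0 : ∀ᵐ x ∂(volume : Measure ℝ), x ∈ Ioo a b → 0 ≤ n x)
    (hmnne : ¬ (∀ᵐ x ∂(volume : Measure ℝ), x ∈ Ioo a b → m x + n x = 0))
    (hf : ContinuousOn f (Ici 0)) (hg : ContinuousOn g (Ici 0))
    (hf0 : ∀ t ∈ Ici (0:ℝ), 0 ≤ f t) (hg0 : ∀ t ∈ Ici (0:ℝ), 0 ≤ g t)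
    (hG1 : CondG1 φ g) :
    ∀ mu : ℝ, 0 < mu → ∃ lam0 : ℝ, 0 < lam0 ∧
      ∃ W W' : ℝ → ℝ → ℝ,
        (∀ lam ∈ Ioo (0:ℝ) lam0,
          C1On (W lam) (W' lam) a b ∧ W lam a = 0 ∧ W lam b = 0 ∧
          InPint (W lam) (W' lam) a b ∧
          ∃ k : ℝ → ℝ, IntegrableOn k (Icc a b) ∧
            (∀ᵐ x ∂(volume : Measure ℝ), x ∈ Ioo a b → 0 ≤ k x) ∧
            (∀ᵐ x ∂(volume : Measure ℝ), x ∈ Ioo a b →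
              lam * m x * f (W lam x) + mu * n x * g (W lam x) ≤ k x) ∧
            ∀ x ∈ Icc a b, φ (W' lam x) = φ (W' lam a) - ∫ s in a..x, k s) ∧
        Tendsto (fun lam => sSup ((fun x => |W lam x|) '' Icc a b))
          (nhdsWithin 0 (Ioi 0)) (nhds 0) := by
  obtain ⟨hφmono, hφcont, hφsurj, hφodd⟩ := hφ
  obtain ⟨c₁, t₁, r₁, hc₁, ht₁, hr₁, hgle, hglim⟩ := hG1
  intro mu hmu
  -- inverse homeomorphism
  set e : ℝ ≃o ℝ := StrictMono.orderIsoOfSurjective φ hφmono hφsurj with he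
  set ψ : ℝ → ℝ := fun y => e.symm y with hψdef
  have hφψ : ∀ y, φ (ψ y) = y := fun y =>
    StrictMono.orderIsoOfSurjective_self_symm_apply φ hφmono hφsurj y
  have hψφ : ∀ x, ψ (φ x) = x := fun x =>
    StrictMono.orderIsoOfSurjective_symm_apply_self φ hφmono hφsurj x
  have hψmono : StrictMono ψ := fun x y hxy => by
    have := e.symm.strictMono hxy; exact this
  have hψcont : Continuous ψ := e.symm.continuous
  have hφ0 : φ 0 = 0 := by have := hφodd 0; simp at this; linarith
  have hψ0 : ψ 0 = 0 := by have := hψφ 0; rwa [hφ0] at this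
  have hψodd : ∀ y, ψ (-y) = -ψ y := by
    intro y
    have : φ (-(ψ y)) = -y := by rw [hφodd, hφψ]
    rw [← this, hψφ]
  -- the weight function
  set A : ℝ → ℝ := fun x => |m x| + |n x| with hAdef
  set h : ℝ → ℝ := fun x => A x + A (a + b - x) + 2 with hhdef
  have hmi : IntervalIntegrable m volume a b := by
    rw [← uIcc_of_le hab.le] at hm; exact hm.intervalIntegrable
  have hni : IntervalIntegrable n volume a b := by
    rw [← uIcc_of_le hab.le] at hn; exact hn.intervalIntegrable
  have hAi : IntervalIntegrable A volume a b := hmi.abs.add hni.abs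
  have hAri : IntervalIntegrable (fun x => A (a + b - x)) volume a b := by
    have := hAi.comp_sub_left (a + b)
    rw [show a + b - a = b by ring, show a + b - b = a by ring] at this
    exact this.symm
  have hhi : IntervalIntegrable h volume a b := (hAi.add hAri).add intervalIntegrable_const
  have hA0 : ∀ x, 0 ≤ A x := fun x => by positivity
  have hh2 : ∀ x, 2 ≤ h x := fun x => by
    have := hA0 x; have := hA0 (a + b - x); simp only [hhdef]; linarith
  have hhsymm : ∀ t, h (a + b - t) = h t := by
    intro t
    simp only [hhdef, hAdef]
    rw [show a + b - (a + b - t) = t by ring]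
    ring
  -- primitive K and its properties
  set K : ℝ → ℝ := fun x => ∫ t in a..x, h t with hKdef
  set I : ℝ := K b with hIdef
  have hhint2 : ∀ x ∈ Icc a b, ∀ y ∈ Icc a b, IntervalIntegrable h volume x y := by
    intro x hx y hy
    refine hhi.mono_set (uIcc_subset_uIcc ?_ ?_) <;> rw [uIcc_of_le hab.le]
    exacts [hx, hy]
  have hamem : a ∈ Icc a b := ⟨le_rfl, hab.le⟩
  have hbmem : b ∈ Icc a b := ⟨hab.le, le_rfl⟩
  have hKgap : ∀ x ∈ Icc a b, ∀ y ∈ Icc a b, x ≤ y → 2 * (y - x) ≤ K y - K x := by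
    intro x hx y hy hxy
    have hadd : K x + ∫ t in x..y, h t = K y :=
      intervalIntegral.integral_add_adjacent_intervals (hhint2 a hamem x hx) (hhint2 x hx y hy)
    have hmono : (∫ t in x..y, (2:ℝ)) ≤ ∫ t in x..y, h t :=
      intervalIntegral.integral_mono_on hxy intervalIntegrable_const (hhint2 x hx y hy)
        (fun t _ => hh2 t)
    rw [intervalIntegral.integral_const, smul_eq_mul] at hmono
    linarith
  have hK0 : K a = 0 := intervalIntegral.integral_same
  have hIpos : 0 < I := by
    have := hKgap a hamem b hbmem hab.le
    rw [hK0] at this; simp only [hIdef]; linarith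
  have hKnonneg : ∀ x ∈ Icc a b, 0 ≤ K x := by
    intro x hx; have := hKgap a hamem x hx hx.1; rw [hK0] at this; linarith [hx.1]
  have hKleI : ∀ x ∈ Icc a b, K x ≤ I := by
    intro x hx; have := hKgap x hx b hbmem hx.2; simp only [hIdef] at *; linarith [hx.2]
  have hKrefl : ∀ x ∈ Icc a b, K (a + b - x) = I - K x := by
    intro x hx
    have e1 : (∫ t in a..(a + b - x), h t) = ∫ t in x..b, h t := by
      have h2 := intervalIntegral.integral_comp_sub_left (a := a) (b := a + b - x) h (a + b)
      rw [show a + b - (a + b - x) = x by ring, show a + b - a = b by ring] at h2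
      rw [← h2]
      exact intervalIntegral.integral_congr fun t _ => (hhsymm t).symm
    have e2 : K x + ∫ t in x..b, h t = I :=
      intervalIntegral.integral_add_adjacent_intervals (hhint2 a hamem x hx) (hhint2 x hx b hbmem)
    have e3 : K (a + b - x) = ∫ t in a..(a + b - x), h t := rfl
    rw [e3, e1]; linarith
  have hKhalf : K ((a + b) / 2) = I / 2 := by
    have hmid : (a + b) / 2 ∈ Icc a b := ⟨by linarith, by linarith⟩
    have := hKrefl ((a + b) / 2) hmid
    rw [show a + b - (a + b) / 2 = (a + b) / 2 by ring] at this
    linarith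
  have hhIcc : IntegrableOn h (Icc a b) := by
    rw [integrableOn_Icc_iff_integrableOn_Ioc]
    exact (intervalIntegrable_iff_integrableOn_Ioc_of_le hab.le).1 hhi
  have hKcont : ContinuousOn K (Icc a b) := by
    have := intervalIntegral.continuousOn_primitive_interval (a := a) (b := b) (μ := volume)
      (f := h) (by rwa [uIcc_of_le hab.le])
    rwa [uIcc_of_le hab.le] at this
  -- constants from condition (G1)
  set B : ℝ := 2 / (mu * c₁ * (b - a) ^ r₁ * I) with hBdef
  have hbar : (0:ℝ) < (b - a) ^ r₁ := Real.rpow_pos_of_pos (by linarith) r₁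
  have hBpos : 0 < B := by
    apply div_pos (by norm_num)
    positivity
  obtain ⟨δ₁, hδ₁pos, hδbound⟩ := Metric.tendsto_nhdsWithin_nhds.1 hglim B hBpos
  set δ₀ : ℝ := min (δ₁ / 2) (t₁ / (b - a)) with hδ₀def
  have hδ₀pos : 0 < δ₀ := lt_min (by linarith) (div_pos ht₁ (by linarith))
  have hδ₀lt : δ₀ < δ₁ := (min_le_left _ _).trans_lt (by linarith)
  set S₀ : ℝ := (b - a) * δ₀ with hS₀def
  have hS₀pos : 0 < S₀ := mul_pos (by linarith) hδ₀pos
  have hS₀t₁ : S₀ ≤ t₁ := by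
    have h1 : δ₀ ≤ t₁ / (b - a) := min_le_right _ _
    rw [hS₀def]
    rw [le_div_iff₀ (by linarith : (0:ℝ) < b - a)] at h1
    linarith
  -- bound for f on the relevant range
  set F₀ : ℝ := sSup (f '' Icc 0 S₀) with hF₀def
  have hbdd : BddAbove (f '' Icc 0 S₀) :=
    isCompact_Icc.bddAbove_image (hf.mono (fun t ht => ht.1))
  have hF₀ : ∀ t ∈ Icc (0:ℝ) S₀, f t ≤ F₀ := fun t ht => le_csSup hbdd (mem_image_of_mem f ht)
  have hF₀0 : 0 ≤ F₀ := le_trans (hf0 0 Set.self_mem_Ici) (hF₀ 0 ⟨le_rfl, hS₀pos.le⟩)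
  have hφδ₀pos : 0 < φ δ₀ := by have := hφmono hδ₀pos; rwa [hφ0] at this
  set lam0 : ℝ := 2 * φ δ₀ / ((F₀ + 1) * I) with hlam0def
  have hlam0pos : 0 < lam0 := by
    apply div_pos (by linarith)
    positivity
  -- the supersolution family
  set W' : ℝ → ℝ → ℝ := fun lam x => ψ (lam * (F₀ + 1) * (I / 2 - K x)) with hW'def
  set W : ℝ → ℝ → ℝ := fun lam x => ∫ t in a..x, W' lam t with hWdef
  have hW'cont : ∀ lam, ContinuousOn (W' lam) (Icc a b) := fun lam =>
    hψcont.comp_continuousOn (continuousOn_const.mul (continuousOn_const.sub hKcont))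
  have hW'int : ∀ lam, ∀ x ∈ Icc a b, ∀ y ∈ Icc a b, IntervalIntegrable (W' lam) volume x y := by
    intro lam x hx y hy
    apply ContinuousOn.intervalIntegrable
    apply (hW'cont lam).mono
    have hsub : uIcc x y ⊆ uIcc a b :=
      uIcc_subset_uIcc (by rwa [uIcc_of_le hab.le]) (by rwa [uIcc_of_le hab.le])
    rwa [uIcc_of_le hab.le] at hsub
  have hW'abs : ∀ lam : ℝ, 0 ≤ lam → ∀ x ∈ Icc a b,
      |W' lam x| ≤ ψ (lam * (F₀ + 1) * I / 2) := by
    intro lam hlam x hx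
    have hc0 : 0 ≤ lam * (F₀ + 1) := by positivity
    have h1 : lam * (F₀ + 1) * (I / 2 - K x) ≤ lam * (F₀ + 1) * I / 2 := by
      nlinarith [hKnonneg x hx]
    have h2 : -(lam * (F₀ + 1) * I / 2) ≤ lam * (F₀ + 1) * (I / 2 - K x) := by
      nlinarith [hKleI x hx]
    rw [abs_le]
    constructor
    · rw [← hψodd]
      exact hψmono.monotone h2
    · exact hψmono.monotone h1
  have hψc_nonneg : ∀ lam : ℝ, 0 ≤ lam → 0 ≤ ψ (lam * (F₀ + 1) * I / 2) := by
    intro lam hlam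
    rw [← hψ0]
    apply hψmono.monotone
    positivity
  have hWle : ∀ lam : ℝ, 0 ≤ lam → ∀ x ∈ Icc a b,
      |W lam x| ≤ (b - a) * ψ (lam * (F₀ + 1) * I / 2) := by
    intro lam hlam x hx
    have hb1 : ∀ t ∈ Set.uIoc a x, ‖W' lam t‖ ≤ ψ (lam * (F₀ + 1) * I / 2) := by
      intro t ht
      rw [Set.uIoc_of_le hx.1] at ht
      exact hW'abs lam hlam t ⟨ht.1.le, ht.2.trans hx.2⟩
    have := intervalIntegral.norm_integral_le_of_norm_le_const hb1
    rw [Real.norm_eq_abs] at this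
    calc |W lam x| ≤ ψ (lam * (F₀ + 1) * I / 2) * |x - a| := this
      _ ≤ (b - a) * ψ (lam * (F₀ + 1) * I / 2) := by
          rw [abs_of_nonneg (by linarith [hx.1]), mul_comm]
          exact mul_le_mul_of_nonneg_right (by linarith [hx.2]) (hψc_nonneg lam hlam)
  refine ⟨lam0, hlam0pos, W, W', fun lam hlam => ?_, ?_⟩
  · obtain ⟨hlam, hlamlt⟩ := hlam
    set ε : ℝ := lam * (F₀ + 1) with hεdef
    have hεpos : 0 < ε := mul_pos hlam (by linarith)
    set c : ℝ := ε * I / 2 with hcdef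
    have hcpos : 0 < c := div_pos (mul_pos hεpos hIpos) two_pos
    have hcle : c ≤ φ δ₀ := by
      have h1 : lam * ((F₀ + 1) * I) < 2 * φ δ₀ := by
        rw [hlam0def] at hlamlt
        exact (lt_div_iff₀ (by positivity)).1 hlamlt
      have h2 : c = lam * ((F₀ + 1) * I) / 2 := by rw [hcdef, hεdef]; ring
      linarith
    set δ : ℝ := ψ c with hδdef
    have hφδ : φ δ = c := hφψ c
    have hδpos : 0 < δ := by
      rw [hδdef, ← hψ0]; exact hψmono hcpos
    have hδle : δ ≤ δ₀ := by
      rw [hδdef]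
      have := hψmono.monotone hcle
      rwa [hψφ] at this
    have hδlt₁ : δ < δ₁ := lt_of_le_of_lt hδle hδ₀lt
    have hW'a : W' lam a = δ := by
      simp only [hW'def]
      rw [hK0, hδdef]
      congr 1
      rw [hcdef, hεdef]; ring
    have hW'b : W' lam b = -δ := by
      simp only [hW'def]
      rw [← hIdef, hδdef, ← hψodd]
      congr 1
      rw [hcdef, hεdef]; ring
    have hW'dec : StrictAntiOn (W' lam) (Icc a b) := by
      intro x hx y hy hxy
      simp only [hW'def]
      apply hψmono
      have hKlt : K x < K y := by have := hKgap x hx y hy hxy.le; linarith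
      have hεF : 0 < lam * (F₀ + 1) := hεpos
      exact mul_lt_mul_of_pos_left (by linarith) hεF
    have hmid : (a + b) / 2 ∈ Icc a b := ⟨by linarith, by linarith⟩
    have hW'mid : W' lam ((a + b) / 2) = 0 := by
      simp only [hW'def]
      rw [hKhalf, show lam * (F₀ + 1) * (I / 2 - I / 2) = 0 by ring, hψ0]
    have hWcont : ContinuousOn (W lam) (Icc a b) := by
      simp only [hWdef]
      have hIcc2 : IntegrableOn (W' lam) (uIcc a b) volume := by
        rw [uIcc_of_le hab.le]
        exact (hW'cont lam).integrableOn_Icc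
      have := intervalIntegral.continuousOn_primitive_interval (μ := volume) hIcc2
      rwa [uIcc_of_le hab.le] at this
    have hWderiv : ∀ x ∈ Icc a b, HasDerivWithinAt (W lam) (W' lam x) (Icc a b) x := by
      intro x hx
      haveI : Fact (x ∈ Icc a b) := ⟨hx⟩
      have hmeas : StronglyMeasurableAtFilter (W' lam) (nhdsWithin x (Icc a b)) volume :=
        ⟨Icc a b, self_mem_nhdsWithin, ((hW'cont lam).aestronglyMeasurable measurableSet_Icc)⟩
      have := intervalIntegral.integral_hasDerivWithinAt_right (s := Icc a b) (t := Icc a b)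
        (hW'int lam a hamem x hx) hmeas ((hW'cont lam) x hx)
      simp only [hWdef]
      exact this
    have hWa : W lam a = 0 := by
      simp only [hWdef]; exact intervalIntegral.integral_same
    have hanti : ∀ x ∈ Icc a b, W' lam (a + b - x) = -W' lam x := by
      intro x hx
      simp only [hW'def]
      rw [hKrefl x hx, ← hψodd]
      congr 1; ring
    have hWb : W lam b = 0 := by
      have E1 : (∫ x in a..b, W' lam (a + b - x)) = ∫ x in a..b, W' lam x := by
        have h2 := intervalIntegral.integral_comp_sub_left (a := a) (b := b) (W' lam) (a + b)
        rw [show a + b - b = a by ring, show a + b - a = b by ring] at h2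
        exact h2
      have E2 : (∫ x in a..b, W' lam (a + b - x)) = -∫ x in a..b, W' lam x := by
        rw [← intervalIntegral.integral_neg]
        apply intervalIntegral.integral_congr
        intro x hx
        rw [uIcc_of_le hab.le] at hx
        exact hanti x hx
      have E3 : (∫ x in a..b, W' lam x) = 0 := by linarith
      simp only [hWdef]; exact E3
    have hposW : ∀ x ∈ Ioo a b, 0 < W lam x := by
      intro x hx
      have hxI : x ∈ Icc a b := Ioo_subset_Icc_self hx
      rcases le_or_gt x ((a + b) / 2) with hxm | hxm
      · have hpos : ∀ t ∈ Ioo a x, 0 < W' lam t := by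
          intro t ht
          have htI : t ∈ Icc a b := ⟨ht.1.le, le_trans ht.2.le hxI.2⟩
          have htm : t < (a + b) / 2 := lt_of_lt_of_le ht.2 hxm
          have := hW'dec htI hmid htm
          rwa [hW'mid] at this
        have := intervalIntegral.intervalIntegral_pos_of_pos_on
          (hW'int lam a hamem x hxI) hpos hx.1
        simp only [hWdef]
        exact this
      · have hpos : ∀ t ∈ Ioo x b, 0 < -W' lam t := by
          intro t ht
          have htI : t ∈ Icc a b := ⟨hxI.1.trans ht.1.le, ht.2.le⟩
          have htm : (a + b) / 2 < t := lt_trans hxm ht.1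
          have := hW'dec hmid htI htm
          rw [hW'mid] at this
          linarith
        have h2 : 0 < ∫ t in x..b, -W' lam t :=
          intervalIntegral.intervalIntegral_pos_of_pos_on
            ((hW'int lam x hxI b hbmem).neg) hpos hx.2
        rw [intervalIntegral.integral_neg] at h2
        have hadd : (∫ t in a..x, W' lam t) + ∫ t in x..b, W' lam t = ∫ t in a..b, W' lam t :=
          intervalIntegral.integral_add_adjacent_intervals (hW'int lam a hamem x hxI)
            (hW'int lam x hxI b hbmem)
        have hWb' : (∫ t in a..b, W' lam t) = 0 := hWb
        simp only [hWdef]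
        linarith
    have hψcδ : ψ (lam * (F₀ + 1) * I / 2) = δ := by
      rw [hδdef]
    have hWub : ∀ x ∈ Icc a b, W lam x ≤ (b - a) * δ := by
      intro x hx
      have h1 := hWle lam hlam.le x hx
      rw [hψcδ] at h1
      exact (le_abs_self _).trans h1
    have hWmem : ∀ x ∈ Icc a b, W lam x ∈ Icc (0:ℝ) S₀ := by
      intro x hx
      constructor
      · rcases eq_or_lt_of_le hx.1 with h1 | h1
        · rw [← h1, hWa]
        · rcases eq_or_lt_of_le hx.2 with h2 | h2
          · rw [h2, hWb]
          · exact (hposW x ⟨h1, h2⟩).le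
      · have h4 : (b - a) * δ ≤ S₀ := by
          rw [hS₀def]
          exact mul_le_mul_of_nonneg_left hδle (by linarith)
        exact (hWub x hx).trans h4
    refine ⟨⟨hWcont, hW'cont lam, hWderiv⟩, hWa, hWb,
      ⟨hposW, by rw [hW'b]; linarith, by rw [hW'a]; exact hδpos⟩, ?_⟩
    refine ⟨fun x => ε * h x, hhIcc.const_mul ε, ?_, ?_, ?_⟩
    · exact Eventually.of_forall fun x _ => mul_nonneg hεpos.le (by linarith [hh2 x])
    · filter_upwards [hm0, hn0] with x hmx hnx hx
      have hmx' := hmx hx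
      have hnx' := hnx hx
      have hxI : x ∈ Icc a b := Ioo_subset_Icc_self hx
      have hWx := hWmem x hxI
      have hWici : W lam x ∈ Ici (0:ℝ) := hWx.1
      have hfW : f (W lam x) ≤ F₀ := hF₀ _ hWx
      have hfW0 : 0 ≤ f (W lam x) := hf0 _ hWici
      have hgW0 : 0 ≤ g (W lam x) := hg0 _ hWici
      have hgW : g (W lam x) ≤ c₁ * (W lam x) ^ r₁ := hgle _ ⟨hWx.1, hWx.2.trans hS₀t₁⟩
      have hWr : (W lam x) ^ r₁ ≤ ((b - a) * δ) ^ r₁ :=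
        Real.rpow_le_rpow hWx.1 (hWub x hxI) hr₁.le
      have hmulr : ((b - a) * δ) ^ r₁ = (b - a) ^ r₁ * δ ^ r₁ :=
        Real.mul_rpow (by linarith) hδpos.le
      have hδB : δ ^ r₁ < B * c := by
        have hd := hδbound (mem_Ioi.2 hδpos)
          (by rw [Real.dist_eq, sub_zero, abs_of_pos hδpos]; exact hδlt₁)
        rw [Real.dist_eq, sub_zero, hφδ] at hd
        have h7 : δ ^ r₁ / c < B := lt_of_le_of_lt (le_abs_self _) hd
        exact (div_lt_iff₀ hcpos).1 h7
      have hgpart : mu * g (W lam x) ≤ ε := by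
        have h5 : mu * c₁ * (b - a) ^ r₁ * (B * c) = 2 * c / I := by
          rw [hBdef]; field_simp
        have h6 : ε = 2 * c / I := by
          rw [hcdef]; field_simp
        calc mu * g (W lam x) ≤ mu * (c₁ * (W lam x) ^ r₁) :=
              mul_le_mul_of_nonneg_left hgW hmu.le
          _ ≤ mu * (c₁ * ((b - a) ^ r₁ * δ ^ r₁)) := by
              apply mul_le_mul_of_nonneg_left _ hmu.le
              apply mul_le_mul_of_nonneg_left _ hc₁.le
              rw [← hmulr]; exact hWr
          _ = mu * c₁ * (b - a) ^ r₁ * δ ^ r₁ := by ring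
          _ ≤ mu * c₁ * (b - a) ^ r₁ * (B * c) :=
              mul_le_mul_of_nonneg_left hδB.le (by positivity)
          _ = 2 * c / I := h5
          _ = ε := h6.symm
      have hfpart : lam * f (W lam x) ≤ ε := by
        rw [hεdef]
        exact mul_le_mul_of_nonneg_left (by linarith) hlam.le
      have p1 : m x * (lam * f (W lam x)) ≤ m x * ε := mul_le_mul_of_nonneg_left hfpart hmx'
      have p2 : n x * (mu * g (W lam x)) ≤ n x * ε := mul_le_mul_of_nonneg_left hgpart hnx'
      calc lam * m x * f (W lam x) + mu * n x * g (W lam x)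
          = m x * (lam * f (W lam x)) + n x * (mu * g (W lam x)) := by ring
        _ ≤ m x * ε + n x * ε := add_le_add p1 p2
        _ ≤ |m x| * ε + |n x| * ε :=
            add_le_add (mul_le_mul_of_nonneg_right (le_abs_self _) hεpos.le)
              (mul_le_mul_of_nonneg_right (le_abs_self _) hεpos.le)
        _ = ε * (|m x| + |n x|) := by ring
        _ ≤ ε * h x := by
            apply mul_le_mul_of_nonneg_left _ hεpos.le
            have h8 := hA0 (a + b - x)
            simp only [hhdef, hAdef]
            simp only [hAdef] at h8
            linarith
    · intro x hx
      have h2 : (∫ s in a..x, ε * h s) = ε * K x := by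
        rw [intervalIntegral.integral_const_mul]
      simp only [hW'def]
      rw [hφψ, hφψ, h2, hK0]
      ring
  · -- the sup tends to zero
    have hup : ∀ᶠ lam in nhdsWithin (0:ℝ) (Ioi 0),
        sSup ((fun x => |W lam x|) '' Icc a b) ≤ (b - a) * ψ (lam * (F₀ + 1) * I / 2) := by
      filter_upwards [self_mem_nhdsWithin] with lam hlam
      apply Real.sSup_le
      · rintro y ⟨x, hx, rfl⟩
        exact hWle lam (le_of_lt hlam) x hx
      · exact mul_nonneg (by linarith) (hψc_nonneg lam (le_of_lt hlam))
    have hlow : ∀ᶠ lam in nhdsWithin (0:ℝ) (Ioi 0),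
        (0:ℝ) ≤ sSup ((fun x => |W lam x|) '' Icc a b) := by
      apply Eventually.of_forall
      intro lam
      apply Real.sSup_nonneg
      rintro y ⟨x, hx, rfl⟩
      exact abs_nonneg _
    have hG : Tendsto (fun lam : ℝ => (b - a) * ψ (lam * (F₀ + 1) * I / 2))
        (nhdsWithin (0:ℝ) (Ioi 0)) (nhds 0) := by
      have hcont : Continuous fun lam : ℝ => (b - a) * ψ (lam * (F₀ + 1) * I / 2) := by
        exact continuous_const.mul (hψcont.comp
          (((continuous_id.mul continuous_const).mul continuous_const).div_const 2))
      have := (hcont.tendsto 0).mono_left (nhdsWithin_le_nhds (s := Ioi (0:ℝ)))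
      simpa [hψ0] using this
    exact tendsto_of_tendsto_of_tendsto_of_le_of_le' tendsto_const_nhds hG hlow hup



theorem exists_supersolution
    (a b : ℝ) (hab : a < b) (φ m n f g : ℝ → ℝ)
    (hφ : OddIncHomeo φ)
    (hm : IntegrableOn m (Icc a b)) (hn : IntegrableOn n (Icc a b))
    (hm0 : ∀ᵐ x ∂(volume : Measure ℝ), x ∈ Ioo a b → 0 ≤ m x)
    (hn0 : ∀ᵐ x ∂(volume : Measure ℝ), x ∈ Ioo a b → 0 ≤ n x)
    (hmnne : ¬ (∀ᵐ x ∂(volume : Measure ℝ), x ∈ Ioo a b → m x + n x = 0))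
    (hf : ContinuousOn f (Ici 0)) (hg : ContinuousOn g (Ici 0))
    (hf0 : ∀ t ∈ Ici (0:ℝ), 0 ≤ f t) (hg0 : ∀ t ∈ Ici (0:ℝ), 0 ≤ g t)
    (hG1 : CondG1 φ g) :
    ∀ mu : ℝ, 0 < mu → ∃ lam0 : ℝ, 0 < lam0 ∧
      ∃ W W' : ℝ → ℝ → ℝ,
        (∀ lam ∈ Ioo (0:ℝ) lam0,
          C1On (W lam) (W' lam) a b ∧ W lam a = 0 ∧ W lam b = 0 ∧
          InPint (W lam) (W' lam) a b ∧
          ∃ k : ℝ → ℝ, IntegrableOn k (Icc a b) ∧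
            (∀ᵐ x ∂(volume : Measure ℝ), x ∈ Ioo a b → 0 ≤ k x) ∧
            (∀ᵐ x ∂(volume : Measure ℝ), x ∈ Ioo a b →
              lam * m x * f (W lam x) + mu * n x * g (W lam x) ≤ k x) ∧
            ∀ x ∈ Icc a b, φ (W' lam x) = φ (W' lam a) - ∫ s in a..x, k s) ∧
        Tendsto (fun lam => sSup ((fun x => |W lam x|) '' Icc a b))
          (nhdsWithin 0 (Ioi 0)) (nhds 0) :=
  exists_supersolution_aux a b hab φ m n f g hφ hm hn hm0 hn0 hmnne hf hg hf0 hg0 hG1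
end

section
/- Let 0 ≤ m, n ∈ L¹(a,b) with m ≢ 0, let f, g : [0,∞) → [0,∞) be continuous and assume (F). Then for all λ, μ > 0 there exists v ∈ P° which is a subsolution of problem (P): there exists 0 ≤ k ∈ L¹(a,b) with k(x) ≤ λ m(x) f(v(x)) + μ n(x) g(v(x)) for a.e. x ∈ (a,b) and φ(v'(x)) = φ(v'(a)) − ∫_a^x k(s) ds for all x ∈ [a,b]. -/
/-!
The subsolution solves the auxiliary problem `-(φ(v'))' = ε m(x) d(x)^q`, `v(a) = v(b) = 0`,
with `d(x) = min (x - a) (b - x)`. It is explicit: `v' = φ⁻¹(A - ε K)`, where `K` is the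
primitive of `m d^q` and the shooting parameter `A` is chosen by the intermediate value theorem so
that `v(b) = 0`. The scale is fixed by `ε K(b) = 4 φ(t)`: then `v'` is `≥ t` near `a` or `≤ -t`
near `b`, so the concave function `v` lies above the tent `η t d` with `η` independent of `t`,
while `v ≤ (b - a) φ⁻¹(4 φ(t))`. By (F), for small `t` this gives
`ε d^q ≤ λ c₀ (η t d)^q ≤ λ c₀ v^q ≤ λ f(v)`, the subsolution inequality for `k = ε m d^q`.
-/

open MeasureTheory Set Filter

open Topology

section IntervalIntegralBounds

variable {w : ℝ → ℝ} {p r c : ℝ}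

lemma mul_le_intervalIntegral_of_le (hw : IntervalIntegrable w volume p r) (hpr : p ≤ r)
    (h : ∀ s ∈ Icc p r, c ≤ w s) : (r - p) * c ≤ ∫ s in p..r, w s := by
  simpa [mul_comm] using intervalIntegral.integral_mono_on hpr intervalIntegrable_const hw h

lemma intervalIntegral_le_mul_of_le (hw : IntervalIntegrable w volume p r) (hpr : p ≤ r)
    (h : ∀ s ∈ Icc p r, w s ≤ c) : ∫ s in p..r, w s ≤ (r - p) * c := by
  simpa [mul_comm] using intervalIntegral.integral_mono_on hpr hw intervalIntegrable_const h

end IntervalIntegralBounds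

lemma monotone_primitive_of_nonneg_ae {k : ℝ → ℝ} (hk : Integrable k) (hk₀ : 0 ≤ᵐ[volume] k)
    (a : ℝ) : Monotone fun x => ∫ s in a..x, k s := fun x y hxy => by
  rw [← sub_nonneg, intervalIntegral.integral_interval_sub_left hk.intervalIntegrable
    hk.intervalIntegrable]
  exact intervalIntegral.integral_nonneg_of_ae hxy hk₀

lemma concaveOn_primitive_of_antitone {w : ℝ → ℝ} (hw : Continuous w) (hanti : Antitone w)
    (a : ℝ) : ConcaveOn ℝ univ fun x => ∫ s in a..x, w s := by
  have hv : ∀ x, HasDerivAt (fun x => ∫ s in a..x, w s) (w x) x := fun x =>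
    (hw.integral_hasStrictDerivAt a x).hasDerivAt
  refine AntitoneOn.concaveOn_of_deriv convex_univ
    (fun x _ => (hv x).continuousAt.continuousWithinAt)
    (fun x _ => (hv x).differentiableAt.differentiableWithinAt) ?_
  rw [funext fun x => (hv x).deriv]
  exact hanti.antitoneOn _

lemma ConcaveOn.abs_sub_mul_le {s : Set ℝ} {v : ℝ → ℝ} (hv : ConcaveOn ℝ s v) {p x y : ℝ}
    (hp : p ∈ s) (hy : y ∈ s) (hx : x ∈ segment ℝ p y) (hvp : 0 ≤ v p) :
    |x - p| * v y ≤ |y - p| * v x := by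
  obtain ⟨θ, ⟨hθ₀, hθ₁⟩, rfl⟩ := segment_eq_image' ℝ p y ▸ hx
  have hconc := hv.2 hp hy (sub_nonneg.2 hθ₁) hθ₀ (by ring)
  have hcomb : (1 - θ) • p + θ • y = p + θ • (y - p) := by simp only [smul_eq_mul]; ring
  rw [hcomb, smul_eq_mul, smul_eq_mul] at hconc
  have hθv : θ * v y ≤ v (p + θ • (y - p)) := by
    linarith [mul_nonneg (sub_nonneg.2 hθ₁) hvp]
  calc |p + θ • (y - p) - p| * v y = |y - p| * (θ * v y) := by
        rw [add_sub_cancel_left, smul_eq_mul, abs_mul, abs_of_nonneg hθ₀]; ring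
    _ ≤ |y - p| * v (p + θ • (y - p)) := mul_le_mul_of_nonneg_left hθv (abs_nonneg _)

lemma ConcaveOn.mul_min_sub_le {v : ℝ → ℝ} {a b x y : ℝ} (hv : ConcaveOn ℝ (Icc a b) v)
    (hva : 0 ≤ v a) (hvb : 0 ≤ v b) (hy : y ∈ Icc a b) (hvy : 0 ≤ v y) (hx : x ∈ Icc a b) :
    v y * min (x - a) (b - x) ≤ (b - a) * v x := by
  have ha : a ∈ Icc a b := left_mem_Icc.2 (hx.1.trans hx.2)
  have hb : b ∈ Icc a b := right_mem_Icc.2 (hx.1.trans hx.2)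
  have hvx : 0 ≤ v x :=
    (le_min hva hvb).trans (hv.min_le_of_mem_segment ha hb (Icc_subset_segment hx))
  rcases le_total x y with hxy | hyx
  · have h := hv.abs_sub_mul_le ha hy (Icc_subset_segment ⟨hx.1, hxy⟩) hva
    rw [abs_of_nonneg (sub_nonneg.2 hx.1), abs_of_nonneg (sub_nonneg.2 hy.1)] at h
    linarith [mul_le_mul_of_nonneg_left (min_le_left (x - a) (b - x)) hvy,
      mul_le_mul_of_nonneg_right (sub_le_sub_right hy.2 a) hvx]
  · have h := hv.abs_sub_mul_le hb hy (segment_symm ℝ y b ▸ Icc_subset_segment ⟨hyx, hx.2⟩) hvb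
    rw [abs_of_nonpos (sub_nonpos.2 hx.2), abs_of_nonpos (sub_nonpos.2 hy.2)] at h
    linarith [mul_le_mul_of_nonneg_left (min_le_right (x - a) (b - x)) hvy,
      mul_le_mul_of_nonneg_right (sub_le_sub_left hy.1 b) hvx]

lemma div_mul_min_sub_le_primitive {w : ℝ → ℝ} (hw : Continuous w) (hanti : Antitone w)
    {a b y c x : ℝ} (hab : a < b) (hwb : ∫ s in a..b, w s = 0) (hy : y ∈ Icc a b) (hc : 0 ≤ c)
    (hcy : c ≤ ∫ s in a..y, w s) (hx : x ∈ Icc a b) :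
    c / (b - a) * min (x - a) (b - x) ≤ ∫ s in a..x, w s := by
  have hconc : ConcaveOn ℝ (Icc a b) fun x => ∫ s in a..x, w s :=
    (concaveOn_primitive_of_antitone hw hanti a).subset (subset_univ _) (convex_Icc a b)
  rw [div_mul_eq_mul_div, div_le_iff₀' (sub_pos.2 hab)]
  exact (mul_le_mul_of_nonneg_right hcy (le_min (sub_nonneg.2 hx.1) (sub_nonneg.2 hx.2))).trans
    (hconc.mul_min_sub_le intervalIntegral.integral_same.ge hwb.ge hy (hc.trans hcy) hx)

lemma exists_mul_le_primitive {w : ℝ → ℝ} (hw : Continuous w) {a b s₁ s₂ c : ℝ}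
    (hs₁ : s₁ ∈ Icc a b) (hs₂ : s₂ ∈ Icc a b) (hc : 0 ≤ c) (hwb : ∫ s in a..b, w s = 0)
    (h : (∀ s ∈ Icc a s₁, c ≤ w s) ∨ ∀ s ∈ Icc s₂ b, w s ≤ -c) :
    ∃ y ∈ Icc a b, min (s₁ - a) (b - s₂) * c ≤ ∫ s in a..y, w s := by
  rcases h with h | h
  · refine ⟨s₁, hs₁, ?_⟩
    have := mul_le_intervalIntegral_of_le (hw.intervalIntegrable a s₁) hs₁.1 h
    nlinarith [min_le_left (s₁ - a) (b - s₂)]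
  · refine ⟨s₂, hs₂, ?_⟩
    have := intervalIntegral_le_mul_of_le (hw.intervalIntegrable s₂ b) hs₂.2 h
    have hsplit : (∫ s in a..s₂, w s) + ∫ s in s₂..b, w s = ∫ s in a..b, w s :=
      intervalIntegral.integral_add_adjacent_intervals (hw.intervalIntegrable _ _)
        (hw.intervalIntegrable _ _)
    nlinarith [min_le_right (s₁ - a) (b - s₂)]

lemma exists_intervalIntegral_orderIso_sub_eq_zero (ψ : ℝ ≃o ℝ) (hψ0 : ψ 0 = 0) {a b : ℝ}
    (hab : a < b) {K : ℝ → ℝ} (hK : Continuous K) (hK_nonneg : ∀ s ∈ Icc a b, 0 ≤ K s)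
    (hK_le : ∀ s ∈ Icc a b, K s ≤ K b) (hKa : K a = 0) (hKb : 0 < K b) :
    ∃ A ∈ Ioo 0 (K b), ∫ s in a..b, ψ (A - K s) = 0 := by
  have hψ := ψ.continuous
  have hG : Continuous fun A => ∫ s in a..b, ψ (A - K s) :=
    intervalIntegral.continuous_parametric_intervalIntegral_of_continuous' (by fun_prop) a b
  have hG0 : ∫ s in a..b, ψ (0 - K s) < 0 := by
    refine (intervalIntegral.integral_lt_integral_of_continuousOn_of_le_of_exists_lt hab
      (by fun_prop) continuousOn_const (fun s hs => ?_) ⟨b, right_mem_Icc.2 hab.le, ?_⟩).trans_eq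
      intervalIntegral.integral_zero
    · exact hψ0 ▸ ψ.monotone (by linarith [hK_nonneg s (Ioc_subset_Icc_self hs)])
    · exact hψ0 ▸ ψ.strictMono (by linarith)
  have hGb : 0 < ∫ s in a..b, ψ (K b - K s) := by
    refine intervalIntegral.integral_pos hab (by fun_prop) (fun s hs => ?_)
      ⟨a, left_mem_Icc.2 hab.le, ?_⟩
    · exact hψ0 ▸ ψ.monotone (by linarith [hK_le s (Ioc_subset_Icc_self hs)])
    · exact hψ0 ▸ ψ.strictMono (by linarith)
  exact intermediate_value_Ioo hKb.le hG.continuousOn ⟨hG0, hGb⟩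

namespace OddIncHomeo

variable {φ : ℝ → ℝ}

lemma map_zero (hφ : OddIncHomeo φ) : φ 0 = 0 := by
  linarith [neg_zero (G := ℝ) ▸ hφ.2.2.2 0]

lemma eventually_const_mul_lt (hφ : OddIncHomeo φ) (c : ℝ) {T : ℝ} (hT : 0 < T) :
    ∀ᶠ t in 𝓝[>] 0, c * φ t < φ T := by
  have h : Tendsto (fun t => c * φ t) (𝓝[>] 0) (𝓝 0) := by
    simpa [hφ.map_zero] using ((hφ.2.1.tendsto 0).const_mul c).mono_left nhdsWithin_le_nhds
  exact h.eventually_lt_const (hφ.map_zero ▸ hφ.1 hT)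

theorem exists_solution_of_primitive (hφ : OddIncHomeo φ) {a b : ℝ} (hab : a < b)
    {K : ℝ → ℝ} (hK : Continuous K) (hKm : Monotone K) (hKa : K a = 0)
    {s₁ s₂ t T : ℝ} (hs₁ : s₁ ∈ Ioo a b) (hs₂ : s₂ ∈ Ioo a b) (ht : 0 < t)
    (hK₁ : K s₁ ≤ φ t) (hK₂ : 3 * φ t ≤ K s₂) (hKT : K b ≤ φ T) :
    ∃ v w : ℝ → ℝ, C1On v w a b ∧ v a = 0 ∧ v b = 0 ∧ InPint v w a b ∧
      (∀ x ∈ Icc a b, φ (w x) = φ (w a) - K x) ∧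
      (∀ x ∈ Icc a b, v x ≤ (b - a) * T) ∧
      ∀ x ∈ Icc a b, min (s₁ - a) (b - s₂) / (b - a) * t * min (x - a) (b - x) ≤ v x := by
  have hφ0 : φ 0 = 0 := hφ.map_zero
  obtain ⟨hmono, -, hsurj, hodd⟩ := hφ
  set ψ := (hmono.orderIsoOfSurjective φ hsurj).symm
  have hφψ : ∀ y, φ (ψ y) = y := hmono.orderIsoOfSurjective_self_symm_apply φ hsurj
  have hψ0 : ψ 0 = 0 := by simpa [hφ0] using hmono.orderIsoOfSurjective_symm_apply_self φ hsurj 0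
  have hφt : 0 < φ t := hφ0 ▸ hmono ht
  have hd : 0 < min (s₁ - a) (b - s₂) := lt_min (sub_pos.2 hs₁.1) (sub_pos.2 hs₂.2)
  obtain ⟨A, hA, hvb⟩ := exists_intervalIntegral_orderIso_sub_eq_zero ψ hψ0 hab hK
    (fun s hs => hKa ▸ hKm hs.1) (fun s hs => hKm hs.2) hKa (by linarith [hKm hs₂.2.le])
  set w : ℝ → ℝ := fun s => ψ (A - K s)
  have hw : Continuous w := ψ.continuous.comp (continuous_const.sub hK)
  have hφw : ∀ x, φ (w x) = A - K x := fun x => hφψ _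
  have hw_anti : Antitone w := fun x y hxy => ψ.monotone (by linarith [hKm hxy])
  set v : ℝ → ℝ := fun x => ∫ s in a..x, w s
  have hv : ∀ x, HasDerivAt v (w x) x := fun x => (hw.integral_hasStrictDerivAt a x).hasDerivAt
  have hva : v a = 0 := intervalIntegral.integral_same
  have hwa : 0 < w a := hmono.lt_iff_lt.1 (by rw [hφw, hKa, hφ0, sub_zero]; exact hA.1)
  have hwb : w b < 0 := hmono.lt_iff_lt.1 (by rw [hφw, hφ0]; linarith [hA.2])
  -- `v' ≥ t` on `[a, s₁]` if `A ≥ 2 φ(t)`, and `v' ≤ -t` on `[s₂, b]` otherwise.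
  obtain ⟨y, hy, hvy⟩ := exists_mul_le_primitive hw (Ioo_subset_Icc_self hs₁)
    (Ioo_subset_Icc_self hs₂) ht.le hvb <| (le_or_gt (2 * φ t) A).imp
      (fun hA2 s hs => hmono.le_iff_le.1 (by rw [hφw]; linarith [hKm hs.2]))
      (fun hA2 s hs => hmono.le_iff_le.1 (by rw [hφw, hodd]; linarith [hKm hs.1]))
  have hlow : ∀ x ∈ Icc a b,
      min (s₁ - a) (b - s₂) / (b - a) * t * min (x - a) (b - x) ≤ v x := fun x hx => by
    rw [div_mul_eq_mul_div]
    exact div_mul_min_sub_le_primitive hw hw_anti hab hvb hy (mul_pos hd ht).le hvy hx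
  refine ⟨v, w, ⟨fun x _ => (hv x).continuousAt.continuousWithinAt, hw.continuousOn,
    fun x _ => (hv x).hasDerivWithinAt⟩, hva, hvb, ⟨fun x hx => ?_, hwb, hwa⟩,
    fun x _ => by rw [hφw, hφw, hKa, sub_zero], fun x hx => ?_, hlow⟩
  · have hδ : 0 < min (x - a) (b - x) := lt_min (sub_pos.2 hx.1) (sub_pos.2 hx.2)
    exact (mul_pos (mul_pos (div_pos hd (sub_pos.2 hab)) ht) hδ).trans_le
      (hlow x (Ioo_subset_Icc_self hx))
  · have hwaT : w a ≤ T := hmono.le_iff_le.1 (by rw [hφw, hKa, sub_zero]; linarith [hA.2])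
    calc v x ≤ (x - a) * w a := intervalIntegral_le_mul_of_le (hw.intervalIntegrable a x) hx.1
          fun s hs => hw_anti hs.1
      _ ≤ (b - a) * T := mul_le_mul (by linarith [hx.2]) hwaT hwa.le (sub_pos.2 hab).le

end OddIncHomeo

lemma exists_mem_Ioo_eq_div_four {K : ℝ → ℝ} {a b : ℝ} (hab : a < b)
    (hK : ContinuousOn K (Icc a b)) (hKa : K a = 0) (hKb : 0 < K b) :
    ∃ s₁ ∈ Ioo a b, ∃ s₂ ∈ Ioo a b, K s₁ = K b / 4 ∧ K s₂ = 3 * K b / 4 := by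
  obtain ⟨s₁, hs₁, hK₁⟩ := intermediate_value_Ioo hab.le hK
    (show K b / 4 ∈ Ioo (K a) (K b) from ⟨by rw [hKa]; positivity, by linarith⟩)
  obtain ⟨s₂, hs₂, hK₂⟩ := intermediate_value_Ioo hab.le hK
    (show 3 * K b / 4 ∈ Ioo (K a) (K b) from ⟨by rw [hKa]; positivity, by linarith⟩)
  exact ⟨s₁, hs₁, s₂, hs₂, hK₁, hK₂⟩

lemma eventually_le_mul_rpow_of_tendsto {φ : ℝ → ℝ} {q κ : ℝ}
    (h : Tendsto (fun t => t ^ q / φ t) (𝓝[>] 0) atTop) (hκ : 0 < κ) :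
    ∀ᶠ t in 𝓝[>] 0, φ t ≤ κ * t ^ q := by
  filter_upwards [h.eventually_ge_atTop κ⁻¹, self_mem_nhdsWithin] with t ht (htpos : 0 < t)
  rcases le_or_gt (φ t) 0 with hφt | hφt
  · exact hφt.trans (by positivity)
  · rw [le_div_iff₀ hφt] at ht
    calc φ t = κ * (κ⁻¹ * φ t) := by field_simp
      _ ≤ κ * t ^ q := by gcongr

lemma mul_rpow_le_of_mul_le {ε c η δ v q : ℝ} (hq : 0 ≤ q) (hc : 0 ≤ c) (hη : 0 ≤ η)
    (hδ : 0 ≤ δ) (hε : ε ≤ c * η ^ q) (hv : η * δ ≤ v) : ε * δ ^ q ≤ c * v ^ q :=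
  calc ε * δ ^ q ≤ c * η ^ q * δ ^ q := mul_le_mul_of_nonneg_right hε (Real.rpow_nonneg hδ q)
    _ = c * (η * δ) ^ q := by rw [Real.mul_rpow hη hδ, mul_assoc]
    _ ≤ c * v ^ q :=
      mul_le_mul_of_nonneg_left (Real.rpow_le_rpow (mul_nonneg hη hδ) hv hq) hc

noncomputable def boundaryWeighted (m : ℝ → ℝ) (a b q : ℝ) : ℝ → ℝ :=
  (Ioo a b).indicator fun x => m x * min (x - a) (b - x) ^ q

section BoundaryWeighted

variable {m : ℝ → ℝ} {a b q : ℝ}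

lemma boundaryWeighted_of_mem {x : ℝ} (hx : x ∈ Ioo a b) :
    boundaryWeighted m a b q x = m x * min (x - a) (b - x) ^ q :=
  indicator_of_mem hx _

lemma integrable_boundaryWeighted (hm : IntegrableOn m (Ioo a b)) (hq : 0 ≤ q) :
    Integrable (boundaryWeighted m a b q) := by
  refine (integrable_indicator_iff measurableSet_Ioo).2 (hm.mul_bdd (c := (b - a) ^ q)
    (by fun_prop) ?_)
  filter_upwards [ae_restrict_mem measurableSet_Ioo] with x hx
  have hδ : 0 ≤ min (x - a) (b - x) := le_min (sub_nonneg.2 hx.1.le) (sub_nonneg.2 hx.2.le)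
  rw [Real.norm_of_nonneg (Real.rpow_nonneg hδ q)]
  exact Real.rpow_le_rpow hδ ((min_le_right _ _).trans (by linarith [hx.1])) hq

lemma boundaryWeighted_nonneg_ae (hm₀ : ∀ᵐ x ∂(volume : Measure ℝ), x ∈ Ioo a b → 0 ≤ m x) :
    0 ≤ᵐ[volume] boundaryWeighted m a b q := by
  filter_upwards [hm₀] with x hx
  by_cases hxI : x ∈ Ioo a b
  · rw [boundaryWeighted_of_mem hxI]
    exact mul_nonneg (hx hxI)
      (Real.rpow_nonneg (le_min (sub_nonneg.2 hxI.1.le) (sub_nonneg.2 hxI.2.le)) q)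
  · exact (indicator_of_notMem hxI _).ge

lemma intervalIntegral_boundaryWeighted_pos (hab : a < b) (hm : IntegrableOn m (Ioo a b))
    (hq : 0 ≤ q) (hm₀ : ∀ᵐ x ∂(volume : Measure ℝ), x ∈ Ioo a b → 0 ≤ m x)
    (hm_ne : ¬ ∀ᵐ x ∂(volume : Measure ℝ), x ∈ Ioo a b → m x = 0) :
    0 < ∫ x in a..b, boundaryWeighted m a b q x := by
  rw [intervalIntegral.integral_pos_iff_support_of_nonneg_ae (boundaryWeighted_nonneg_ae hm₀)
    (integrable_boundaryWeighted hm hq).intervalIntegrable]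
  refine ⟨hab, pos_iff_ne_zero.2 fun h0 => hm_ne ?_⟩
  filter_upwards [measure_eq_zero_iff_ae_notMem.1 h0] with x hx hxI
  have hzero : boundaryWeighted m a b q x = 0 := by
    simpa [Ioo_subset_Ioc_self hxI] using hx
  rw [boundaryWeighted_of_mem hxI] at hzero
  exact (mul_eq_zero.1 hzero).resolve_right
    (Real.rpow_pos_of_pos (lt_min (sub_pos.2 hxI.1) (sub_pos.2 hxI.2)) q).ne'

lemma ae_mul_boundaryWeighted_le {n f g v : ℝ → ℝ} {c₀ t₀ η ε lam mu : ℝ}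
    (hq : 0 ≤ q) (hlam : 0 ≤ lam) (hmu : 0 ≤ mu) (hc₀ : 0 ≤ c₀) (hη : 0 ≤ η)
    (hm₀ : ∀ᵐ x ∂(volume : Measure ℝ), x ∈ Ioo a b → 0 ≤ m x)
    (hn₀ : ∀ᵐ x ∂(volume : Measure ℝ), x ∈ Ioo a b → 0 ≤ n x)
    (hf : ∀ s ∈ Icc 0 t₀, c₀ * s ^ q ≤ f s) (hg : ∀ s ∈ Ici (0 : ℝ), 0 ≤ g s)
    (hv : ∀ x ∈ Ioo a b, η * min (x - a) (b - x) ≤ v x ∧ v x ≤ t₀)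
    (hε : ε ≤ lam * c₀ * η ^ q) :
    ∀ᵐ x ∂(volume : Measure ℝ), x ∈ Ioo a b →
      ε * boundaryWeighted m a b q x ≤ lam * m x * f (v x) + mu * n x * g (v x) := by
  filter_upwards [hm₀, hn₀] with x hmx hnx hx
  have hδ : 0 ≤ min (x - a) (b - x) := le_min (sub_nonneg.2 hx.1.le) (sub_nonneg.2 hx.2.le)
  have hv₀ : 0 ≤ v x := (mul_nonneg hη hδ).trans (hv x hx).1
  have hεδ := mul_rpow_le_of_mul_le hq (by positivity) hη hδ hε (hv x hx).1
  have hfv := hf _ ⟨hv₀, (hv x hx).2⟩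
  rw [boundaryWeighted_of_mem hx]
  nlinarith [mul_le_mul_of_nonneg_left hεδ (hmx hx),
    mul_le_mul_of_nonneg_left hfv (mul_nonneg hlam (hmx hx)),
    mul_nonneg (mul_nonneg hmu (hnx hx)) (hg _ hv₀)]

end BoundaryWeighted

theorem exists_subsolution_general
    (a b : ℝ) (hab : a < b) (φ m n f g : ℝ → ℝ)
    (hφ : OddIncHomeo φ)
    (hm : IntegrableOn m (Icc a b))
    (hm0 : ∀ᵐ x ∂(volume : Measure ℝ), x ∈ Ioo a b → 0 ≤ m x)
    (hn0 : ∀ᵐ x ∂(volume : Measure ℝ), x ∈ Ioo a b → 0 ≤ n x)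
    (hmne : ¬ (∀ᵐ x ∂(volume : Measure ℝ), x ∈ Ioo a b → m x = 0))
    (hg0 : ∀ t ∈ Ici (0:ℝ), 0 ≤ g t)
    (hF : CondF φ f) :
    ∀ lam mu : ℝ, 0 < lam → 0 < mu →
      ∃ v v' : ℝ → ℝ,
        C1On v v' a b ∧ v a = 0 ∧ v b = 0 ∧
        InPint v v' a b ∧
        ∃ k : ℝ → ℝ, IntegrableOn k (Icc a b) ∧
          (∀ᵐ x ∂(volume : Measure ℝ), x ∈ Ioo a b → 0 ≤ k x) ∧
          (∀ᵐ x ∂(volume : Measure ℝ), x ∈ Ioo a b →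
            k x ≤ lam * m x * f (v x) + mu * n x * g (v x)) ∧
          ∀ x ∈ Icc a b, φ (v' x) = φ (v' a) - ∫ s in a..x, k s := by
  intro lam mu hlam hmu
  obtain ⟨c₀, t₀, q, hc₀, ht₀, hq, hfq, hFlim⟩ := hF
  have hba : 0 < b - a := sub_pos.2 hab
  have hm' : IntegrableOn m (Ioo a b) := hm.mono_set Ioo_subset_Icc_self
  set k₀ := boundaryWeighted m a b q
  have hk₀ : Integrable k₀ := integrable_boundaryWeighted hm' hq.le
  have hk₀_nonneg : 0 ≤ᵐ[volume] k₀ := boundaryWeighted_nonneg_ae hm0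
  set K₀ : ℝ → ℝ := fun x => ∫ s in a..x, k₀ s
  have hK₀a : K₀ a = 0 := intervalIntegral.integral_same
  have hC : 0 < K₀ b := intervalIntegral_boundaryWeighted_pos hab hm' hq.le hm0 hmne
  obtain ⟨s₁, hs₁, s₂, hs₂, hK₁, hK₂⟩ :=
    exists_mem_Ioo_eq_div_four (K := K₀) hab (hk₀.continuous_primitive a).continuousOn hK₀a hC
  set η := min (s₁ - a) (b - s₂) / (b - a)
  have hη : 0 < η := div_pos (lt_min (sub_pos.2 hs₁.1) (sub_pos.2 hs₂.2)) hba
  obtain ⟨t, htκ, htT, ht⟩ := ((eventually_le_mul_rpow_of_tendsto hFlim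
    (κ := lam * c₀ * η ^ q * K₀ b / 4) (by positivity)).and
    ((hφ.eventually_const_mul_lt 4 (div_pos ht₀ hba)).and self_mem_nhdsWithin)).exists
  set ε := 4 * φ t / K₀ b
  have hε : 0 < ε := div_pos (mul_pos four_pos (hφ.map_zero ▸ hφ.1 ht)) hC
  have hεK : ε * K₀ b = 4 * φ t := div_mul_cancel₀ _ hC.ne'
  obtain ⟨v, w, hC1, hva, hvb, hP, hφw, hup, hlow⟩ :=
    hφ.exists_solution_of_primitive hab (K := fun x => ε * K₀ x)
      (continuous_const.mul (hk₀.continuous_primitive a))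
      ((monotone_primitive_of_nonneg_ae hk₀ hk₀_nonneg a).const_mul hε.le)
      (by simp only [hK₀a, mul_zero]) hs₁ hs₂ ht (by rw [hK₁]; linarith) (by rw [hK₂]; linarith)
      (by linarith)
  refine ⟨v, w, hC1, hva, hvb, hP, fun s => ε * k₀ s, (hk₀.const_mul ε).integrableOn, ?_,
    ae_mul_boundaryWeighted_le hq.le hlam.le hmu.le hc₀.le (mul_pos hη ht).le hm0 hn0 hfq hg0
      (fun x hx => ⟨hlow x (Ioo_subset_Icc_self hx),
        (hup x (Ioo_subset_Icc_self hx)).trans_eq (mul_div_cancel₀ _ hba.ne')⟩) ?_,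
    fun x hx => by rw [hφw x hx, intervalIntegral.integral_const_mul]⟩
  · filter_upwards [hk₀_nonneg] with x hx _ using mul_nonneg hε.le hx
  · rw [Real.mul_rpow hη.le ht.le, div_le_iff₀ hC]
    linarith

theorem exists_subsolution
    (a b : ℝ) (hab : a < b) (φ m n f g : ℝ → ℝ)
    (hφ : OddIncHomeo φ)
    (hm : IntegrableOn m (Icc a b)) (hn : IntegrableOn n (Icc a b))
    (hm0 : ∀ᵐ x ∂(volume : Measure ℝ), x ∈ Ioo a b → 0 ≤ m x)
    (hn0 : ∀ᵐ x ∂(volume : Measure ℝ), x ∈ Ioo a b → 0 ≤ n x)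
    (hmne : ¬ (∀ᵐ x ∂(volume : Measure ℝ), x ∈ Ioo a b → m x = 0))
    (hf : ContinuousOn f (Ici 0)) (hg : ContinuousOn g (Ici 0))
    (hf0 : ∀ t ∈ Ici (0:ℝ), 0 ≤ f t) (hg0 : ∀ t ∈ Ici (0:ℝ), 0 ≤ g t)
    (hF : CondF φ f) :
    ∀ lam mu : ℝ, 0 < lam → 0 < mu →
      ∃ v v' : ℝ → ℝ,
        C1On v v' a b ∧ v a = 0 ∧ v b = 0 ∧
        InPint v v' a b ∧
        ∃ k : ℝ → ℝ, IntegrableOn k (Icc a b) ∧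
          (∀ᵐ x ∂(volume : Measure ℝ), x ∈ Ioo a b → 0 ≤ k x) ∧
          (∀ᵐ x ∂(volume : Measure ℝ), x ∈ Ioo a b →
            k x ≤ lam * m x * f (v x) + mu * n x * g (v x)) ∧
          ∀ x ∈ Icc a b, φ (v' x) = φ (v' a) - ∫ s in a..x, k s :=
  exists_subsolution_general a b hab φ m n f g hφ hm hm0 hn0 hmne hg0 hF
end
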